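/- arXiv:2604.03793 — 3 statements merged into one kernel-verified Lean document; each statement's English description precedes it below -/
import Mathlib

section
/- For n ≥ 4, a queen placed at the corner (0,0,0) of the n×n×n board dominates exactly m = n-2 cells of the inner core C = {1,...,n-2}³, namely the cells (i,i,i) for 1 ≤ i ≤ n-2. -/
/-- The 13 canonical direction vectors of a 3D queen. -/
def queenDirs3 : List (ℤ × ℤ × ℤ) :=
  [(1,0,0), (0,1,0), (0,0,1),
   (1,1,0), (1,-1,0), (1,0,1), (1,0,-1), (0,1,1), (0,1,-1),
   (1,1,1), (1,1,-1), (1,-1,1), (1,-1,-1)]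

/-- 3D queen adjacency: distinct cells whose difference is a multiple of a queen direction. -/
def adj3 (v w : ℤ × ℤ × ℤ) : Prop :=
  v ≠ w ∧ ∃ u ∈ queenDirs3, ∃ t : ℤ, w - v = t • u

/-- The n×n×n board, as a subset of ℤ³. -/
def board3 (n : ℕ) : Set (ℤ × ℤ × ℤ) :=
  Set.Icc (0,0,0) ((n:ℤ)-1, (n:ℤ)-1, (n:ℤ)-1)

/-- The inner core {1,…,n-2}³. -/
def core3 (n : ℕ) : Set (ℤ × ℤ × ℤ) :=
  Set.Icc (1,1,1) ((n:ℤ)-2, (n:ℤ)-2, (n:ℤ)-2)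

/-- Closed neighbourhood of q within the board. -/
def nbhd3 (n : ℕ) (q : ℤ × ℤ × ℤ) : Set (ℤ × ℤ × ℤ) :=
  {w ∈ board3 n | w = q ∨ adj3 q w}

/-- κ(q): number of inner-core cells dominated by a queen at q. -/
noncomputable def kappa (n : ℕ) (q : ℤ × ℤ × ℤ) : ℕ :=
  (nbhd3 n q ∩ core3 n).ncard

/-- S is a dominating set of Q³ₙ. -/
def isDom3 (n : ℕ) (S : Set (ℤ × ℤ × ℤ)) : Prop :=
  S ⊆ board3 n ∧ ∀ v ∈ board3 n, ∃ s ∈ S, s = v ∨ adj3 s v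

/-- Domination number of Q³ₙ. -/
noncomputable def gamma3 (n : ℕ) : ℕ :=
  sInf {k | ∃ S, isDom3 n S ∧ S.ncard = k}

/-- For n ≥ 4, a queen at the corner (0,0,0) dominates exactly n-2 core cells,
namely the cells (i,i,i) for 1 ≤ i ≤ n-2. -/
theorem corner_core_coverage (n : ℕ) (hn : 4 ≤ n) :
    kappa n (0,0,0) = n - 2 ∧
    nbhd3 n (0,0,0) ∩ core3 n
      = {w : ℤ × ℤ × ℤ | ∃ i : ℤ, 1 ≤ i ∧ i ≤ (n:ℤ) - 2 ∧ w = (i,i,i)} := by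
  
  have hset : nbhd3 n (0,0,0) ∩ core3 n
      = {w : ℤ × ℤ × ℤ | ∃ i : ℤ, 1 ≤ i ∧ i ≤ (n:ℤ) - 2 ∧ w = (i,i,i)} := by
    ext ⟨x, y, z⟩
    simp only [nbhd3, board3, core3, adj3, queenDirs3, Set.mem_inter_iff, Set.mem_sep_iff,
      Set.mem_setOf_eq, Set.mem_Icc, Prod.mk_le_mk, Prod.mk.injEq, List.mem_cons,
      List.not_mem_nil, or_false, ne_eq]
    constructor
    · rintro ⟨⟨hb, hw⟩, hc⟩
      obtain ⟨⟨h1, h2, h3⟩, h4, h5, h6⟩ := hc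
      rcases hw with heq | ⟨hne, u, hu, t, ht⟩
      · omega
      · rcases hu with rfl|rfl|rfl|rfl|rfl|rfl|rfl|rfl|rfl|rfl|rfl|rfl|rfl
        all_goals simp only [Prod.smul_mk, smul_eq_mul, Prod.mk_sub_mk, Prod.mk.injEq,
            mul_one, mul_zero, mul_neg, sub_zero] at ht
        all_goals obtain ⟨e1, e2, e3⟩ := ht
        all_goals exact ⟨t, by omega, by omega, by omega, by omega, by omega⟩
    · rintro ⟨i, hi1, hi2, e1, e2, e3⟩
      refine ⟨⟨⟨⟨by omega, by omega, by omega⟩, by omega, by omega, by omega⟩, ?_⟩,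
        ⟨by omega, by omega, by omega⟩, by omega, by omega, by omega⟩
      right
      refine ⟨by omega, (1,1,1), by norm_num, i, ?_⟩
      simp only [Prod.smul_mk, smul_eq_mul, Prod.mk_sub_mk, Prod.mk.injEq, mul_one, sub_zero]
      omega
  refine ⟨?_, hset⟩
  have himg : {w : ℤ × ℤ × ℤ | ∃ i : ℤ, 1 ≤ i ∧ i ≤ (n:ℤ) - 2 ∧ w = (i,i,i)}
      = (fun i : ℤ => (i,i,i)) '' (Set.Icc 1 ((n:ℤ)-2)) := by
    ext w
    simp [Set.mem_image, eq_comm, and_comm]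
    tauto
  have hinj : Function.Injective (fun i : ℤ => ((i,i,i) : ℤ × ℤ × ℤ)) := by
    intro a b h; simpa using congrArg Prod.fst h
  rw [kappa, hset, himg, Set.ncard_image_of_injective _ hinj,
    ← Nat.card_coe_set_eq, Nat.card_eq_card_toFinset]
  rw [Set.toFinset_Icc, Int.card_Icc]
  omega
end

section
/- For n ≥ 4, any queen at a face cell q = (0,y,z) with 1 ≤ y,z ≤ n-2 satisfies κ(q) = 5(n-2) - 4 - (|y-z| + |y+z-(n-1)|); in particular κ(q) ≤ 5(n-2) - 4 - ((n-3) mod 2). -/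
lemma adj_mk (y z a b c ε₂ ε₃ : ℤ) (ha : a ≠ 0)
    (hε : ((1:ℤ),ε₂,ε₃) ∈ queenDirs3) (h2 : b = y + ε₂ * a) (h3 : c = z + ε₃ * a) :
    adj3 (0,y,z) (a, b, c) := by
  subst h2 h3
  refine ⟨fun h => ?_, (1,ε₂,ε₃), hε, a, ?_⟩
  · simp [Prod.ext_iff] at h; omega
  · simp [Prod.ext_iff]; constructor <;> ring

noncomputable def Fset (m y z : ℤ) : Finset (ℤ × ℤ × ℤ) :=
  (Finset.Icc 1 m).biUnion fun a =>
    (((Finset.Icc 1 m).filter fun b => b = y ∨ b = y + a ∨ b = y - a) ×ˢ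
     ((Finset.Icc 1 m).filter fun c => c = z ∨ c = z + a ∨ c = z - a)).image fun p => (a, p)

lemma mem_Fset (m y z a b c : ℤ) :
    (a, b, c) ∈ Fset m y z ↔
      (1 ≤ a ∧ a ≤ m) ∧ (1 ≤ b ∧ b ≤ m) ∧ (1 ≤ c ∧ c ≤ m) ∧
      (b = y ∨ b = y + a ∨ b = y - a) ∧ (c = z ∨ c = z + a ∨ c = z - a) := by
  simp [Fset, Finset.mem_biUnion, Finset.mem_image, Finset.mem_product, Finset.mem_filter,
    Finset.mem_Icc, Prod.ext_iff]
  intro _ _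
  tauto

lemma filter_card (m u a : ℤ) (ha : 1 ≤ a) (hu1 : 1 ≤ u) (hu2 : u ≤ m) :
    ((((Finset.Icc 1 m).filter fun b => b = u ∨ b = u + a ∨ b = u - a)).card : ℤ)
      = 1 + (if a ≤ m - u then (1:ℤ) else 0) + (if a ≤ u - 1 then (1:ℤ) else 0) := by
  split_ifs with h1 h2 h2
  · rw [show (((Finset.Icc 1 m).filter fun b => b = u ∨ b = u + a ∨ b = u - a))
        = {u, u + a, u - a} from by ext b; simp [Finset.mem_Icc]; omega]
    rw [Finset.card_insert_of_notMem (by simp; omega),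
        Finset.card_insert_of_notMem (by simp; omega), Finset.card_singleton]
    norm_num
  · rw [show (((Finset.Icc 1 m).filter fun b => b = u ∨ b = u + a ∨ b = u - a))
        = {u, u + a} from by ext b; simp [Finset.mem_Icc]; omega]
    rw [Finset.card_insert_of_notMem (by simp; omega), Finset.card_singleton]
    norm_num
  · rw [show (((Finset.Icc 1 m).filter fun b => b = u ∨ b = u + a ∨ b = u - a))
        = {u, u - a} from by ext b; simp [Finset.mem_Icc]; omega]
    rw [Finset.card_insert_of_notMem (by simp; omega), Finset.card_singleton]
    norm_num
  · rw [show (((Finset.Icc 1 m).filter fun b => b = u ∨ b = u + a ∨ b = u - a))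
        = {u} from by ext b; simp [Finset.mem_Icc]; omega]
    simp

lemma sum_ite_le (m X : ℤ) (h0 : 0 ≤ X) (hm : X ≤ m) :
    (∑ a ∈ Finset.Icc 1 m, if a ≤ X then (1:ℤ) else 0) = X := by
  rw [Finset.sum_boole]
  rw [show ((Finset.Icc 1 m).filter fun a => a ≤ X) = Finset.Icc 1 X from by
    ext b; simp [Finset.mem_Icc]; omega]
  rw [Int.card_Icc]
  omega

lemma Fset_card (m y z : ℤ) (hy1 : 1 ≤ y) (hy2 : y ≤ m) (hz1 : 1 ≤ z) (hz2 : z ≤ m) :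
    (((Fset m y z).card) : ℤ) = 5 * m - 4 - (|y - z| + |y + z - (m + 1)|) := by
  have hd : ∀ a ∈ Finset.Icc (1:ℤ) m, ∀ a' ∈ Finset.Icc (1:ℤ) m, a ≠ a' →
      Disjoint
        ((((Finset.Icc 1 m).filter fun b => b = y ∨ b = y + a ∨ b = y - a) ×ˢ
          ((Finset.Icc 1 m).filter fun c => c = z ∨ c = z + a ∨ c = z - a)).image fun p => (a, p))
        ((((Finset.Icc 1 m).filter fun b => b = y ∨ b = y + a' ∨ b = y - a') ×ˢ
          ((Finset.Icc 1 m).filter fun c => c = z ∨ c = z + a' ∨ c = z - a')).image fun p => (a', p)) := by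
    intro a _ a' _ hne
    rw [Finset.disjoint_left]
    rintro x hx hx'
    simp only [Finset.mem_image] at hx hx'
    obtain ⟨p, _, rfl⟩ := hx
    obtain ⟨q, _, hq⟩ := hx'
    exact hne (congrArg Prod.fst hq).symm
  rw [Fset, Finset.card_biUnion hd]
  push_cast
  have step : ∀ a ∈ Finset.Icc (1:ℤ) m,
      ((((((Finset.Icc 1 m).filter fun b => b = y ∨ b = y + a ∨ b = y - a) ×ˢ
          ((Finset.Icc 1 m).filter fun c => c = z ∨ c = z + a ∨ c = z - a)).image
            fun p => (a, p)).card : ℤ))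
        = (1 + (if a ≤ m - y then (1:ℤ) else 0) + if a ≤ y - 1 then (1:ℤ) else 0) *
          (1 + (if a ≤ m - z then (1:ℤ) else 0) + if a ≤ z - 1 then (1:ℤ) else 0) := by
    intro a ha
    simp only [Finset.mem_Icc] at ha
    rw [Finset.card_image_of_injective _ (fun p q h => by simpa using h), Finset.card_product]
    push_cast
    rw [filter_card m y a ha.1 hy1 hy2, filter_card m z a ha.1 hz1 hz2]
  rw [Finset.sum_congr rfl step]
  have expand : ∀ a : ℤ,
      (1 + (if a ≤ m - y then (1:ℤ) else 0) + if a ≤ y - 1 then (1:ℤ) else 0) *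
          (1 + (if a ≤ m - z then (1:ℤ) else 0) + if a ≤ z - 1 then (1:ℤ) else 0)
        = 1 + ((if a ≤ m - y then (1:ℤ) else 0) + (if a ≤ y - 1 then (1:ℤ) else 0)
            + (if a ≤ m - z then (1:ℤ) else 0) + (if a ≤ z - 1 then (1:ℤ) else 0))
          + ((if a ≤ min (m - y) (m - z) then (1:ℤ) else 0)
            + (if a ≤ min (m - y) (z - 1) then (1:ℤ) else 0)
            + (if a ≤ min (y - 1) (m - z) then (1:ℤ) else 0)
            + (if a ≤ min (y - 1) (z - 1) then (1:ℤ) else 0)) := by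
    intro a
    split_ifs <;> omega
  rw [Finset.sum_congr rfl (fun a _ => expand a)]
  simp only [Finset.sum_add_distrib, Finset.sum_const, Int.card_Icc, nsmul_eq_mul, mul_one]
  rw [sum_ite_le m (m - y) (by omega) (by omega), sum_ite_le m (y - 1) (by omega) (by omega),
      sum_ite_le m (m - z) (by omega) (by omega), sum_ite_le m (z - 1) (by omega) (by omega),
      sum_ite_le m (min (m - y) (m - z)) (by omega) (by omega),
      sum_ite_le m (min (m - y) (z - 1)) (by omega) (by omega),
      sum_ite_le m (min (y - 1) (m - z)) (by omega) (by omega),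
      sum_ite_le m (min (y - 1) (z - 1)) (by omega) (by omega)]
  rcases abs_cases (y - z) with ⟨h1, _⟩ | ⟨h1, _⟩ <;>
    rcases abs_cases (y + z - (m + 1)) with ⟨h2, _⟩ | ⟨h2, _⟩ <;> rw [h1, h2] <;> omega

lemma key_set (n : ℕ) (hn : 4 ≤ n) (y z : ℤ)
    (hy1 : 1 ≤ y) (hy2 : y ≤ (n:ℤ) - 2) (hz1 : 1 ≤ z) (hz2 : z ≤ (n:ℤ) - 2) :
    nbhd3 n (0,y,z) ∩ core3 n = ↑(Fset ((n:ℤ) - 2) y z) := by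
  ext ⟨a, b, c⟩
  rw [Finset.mem_coe, mem_Fset]
  simp only [nbhd3, core3, board3, Set.mem_inter_iff, Set.mem_setOf_eq, Set.mem_Icc,
    Prod.le_def, Prod.mk.injEq]
  constructor
  · rintro ⟨⟨-, hq | ⟨-, u, hu, t, ht⟩⟩, ⟨h1, h2, h3⟩, h4, h5, h6⟩
    · omega
    · simp only [queenDirs3, List.mem_cons, List.not_mem_nil, or_false] at hu
      rcases hu with rfl | rfl | rfl | rfl | rfl | rfl | rfl | rfl | rfl | rfl | rfl | rfl | rfl <;>
        (simp only [Prod.mk_sub_mk, Prod.smul_mk, smul_eq_mul, Prod.mk.injEq] at ht; omega)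
  · rintro ⟨⟨ha1, ha2⟩, ⟨hb1, hb2⟩, ⟨hc1, hc2⟩, hb, hc⟩
    refine ⟨⟨⟨⟨by omega, by omega, by omega⟩, by omega, by omega, by omega⟩, Or.inr ?_⟩,
      ⟨by omega, by omega, by omega⟩, by omega, by omega, by omega⟩
    rcases hb with rfl | rfl | rfl <;> rcases hc with rfl | rfl | rfl
    · exact adj_mk _ _ a _ _ 0 0 (by omega) (by decide) (by ring) (by ring)
    · exact adj_mk _ _ a _ _ 0 1 (by omega) (by decide) (by ring) (by ring)
    · exact adj_mk _ _ a _ _ 0 (-1) (by omega) (by decide) (by ring) (by ring)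
    · exact adj_mk _ _ a _ _ 1 0 (by omega) (by decide) (by ring) (by ring)
    · exact adj_mk _ _ a _ _ 1 1 (by omega) (by decide) (by ring) (by ring)
    · exact adj_mk _ _ a _ _ 1 (-1) (by omega) (by decide) (by ring) (by ring)
    · exact adj_mk _ _ a _ _ (-1) 0 (by omega) (by decide) (by ring) (by ring)
    · exact adj_mk _ _ a _ _ (-1) 1 (by omega) (by decide) (by ring) (by ring)
    · exact adj_mk _ _ a _ _ (-1) (-1) (by omega) (by decide) (by ring) (by ring)


/-- For n ≥ 4 and a face cell q = (0,y,z) with 1 ≤ y,z ≤ n-2: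
κ(q) = 5(n-2) - 4 - (|y-z| + |y+z-(n-1)|), and κ(q) ≤ 5(n-2) - 4 - ((n-3) mod 2). -/
theorem face_core_coverage (n : ℕ) (hn : 4 ≤ n) (y z : ℤ)
    (hy1 : 1 ≤ y) (hy2 : y ≤ (n:ℤ) - 2) (hz1 : 1 ≤ z) (hz2 : z ≤ (n:ℤ) - 2) :
    (kappa n (0,y,z) : ℤ)
        = 5 * ((n:ℤ) - 2) - 4 - (|y - z| + |y + z - ((n:ℤ) - 1)|) ∧
    kappa n (0,y,z) ≤ 5 * (n - 2) - 4 - ((n - 3) % 2) := by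
  have hkey : (kappa n (0,y,z) : ℤ)
      = 5 * ((n:ℤ) - 2) - 4 - (|y - z| + |y + z - ((n:ℤ) - 1)|) := by
    unfold kappa
    rw [key_set n hn y z hy1 hy2 hz1 hz2, Set.ncard_coe_finset,
      Fset_card ((n:ℤ) - 2) y z hy1 hy2 hz1 hz2]
    ring_nf
  refine ⟨hkey, ?_⟩
  rcases abs_cases (y - z) with ⟨h1, h1'⟩ | ⟨h1, h1'⟩ <;>
    rcases abs_cases (y + z - ((n:ℤ) - 1)) with ⟨h2, h2'⟩ | ⟨h2, h2'⟩ <;>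
    rw [h1, h2] at hkey <;> omega
end

section
/- For n = 6, the set of eight cells {2,3}³ (the central 2×2×2 block) is a dominating set of Q³₆, hence γ(Q³₆) ≤ 8. -/
lemma key (a b c : ℤ)
    (h1 : a = 0 ∨ a = 2 ∨ a = -2) (h2 : b = 0 ∨ b = 2 ∨ b = -2)
    (h3 : c = 0 ∨ c = 2 ∨ c = -2) (hne : ¬(a = 0 ∧ b = 0 ∧ c = 0)) :
    ∃ u ∈ queenDirs3, ((a,b,c) : ℤ×ℤ×ℤ) = (2:ℤ) • u ∨ ((a,b,c) : ℤ×ℤ×ℤ) = (-2:ℤ) • u := by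
  rcases h1 with rfl|rfl|rfl <;> rcases h2 with rfl|rfl|rfl <;> rcases h3 with rfl|rfl|rfl <;>
    first
      | decide
      | exact absurd ⟨rfl, rfl, rfl⟩ hne

lemma adj_of (s v : ℤ × ℤ × ℤ) (hne : s ≠ v)
    (h1 : v.1 - s.1 = 0 ∨ v.1 - s.1 = 2 ∨ v.1 - s.1 = -2)
    (h2 : v.2.1 - s.2.1 = 0 ∨ v.2.1 - s.2.1 = 2 ∨ v.2.1 - s.2.1 = -2)
    (h3 : v.2.2 - s.2.2 = 0 ∨ v.2.2 - s.2.2 = 2 ∨ v.2.2 - s.2.2 = -2) :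
    adj3 s v := by
  obtain ⟨u, hu, h⟩ := key (v.1 - s.1) (v.2.1 - s.2.1) (v.2.2 - s.2.2) h1 h2 h3
    (fun ⟨e1, e2, e3⟩ => hne (Prod.ext (by omega) (Prod.ext (by omega) (by omega))))
  have hvs : v - s = (v.1 - s.1, v.2.1 - s.2.1, v.2.2 - s.2.2) := rfl
  refine ⟨hne, u, hu, ?_⟩
  rcases h with h | h
  · exact ⟨2, hvs.trans h⟩
  · exact ⟨-2, hvs.trans h⟩

def g (x : ℤ) : ℤ := if Even x then 2 else 3

lemma g_mem (x : ℤ) : g x = 2 ∨ g x = 3 := by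
  unfold g; split <;> simp

lemma g_diff (x : ℤ) (h0 : 0 ≤ x) (h5 : x ≤ 5) :
    x - g x = 0 ∨ x - g x = 2 ∨ x - g x = -2 := by
  interval_cases x <;> simp [g] <;> decide

/-- For n = 6 the central 2×2×2 block {2,3}³ is a dominating set, so γ(Q³₆) ≤ 8. -/
theorem central_block_dominates_six :
    isDom3 6 {v : ℤ × ℤ × ℤ |
      v.1 ∈ ({2,3} : Set ℤ) ∧ v.2.1 ∈ ({2,3} : Set ℤ) ∧ v.2.2 ∈ ({2,3} : Set ℤ)} ∧
    gamma3 6 ≤ 8 := by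
  set S : Set (ℤ × ℤ × ℤ) := {v : ℤ × ℤ × ℤ |
      v.1 ∈ ({2,3} : Set ℤ) ∧ v.2.1 ∈ ({2,3} : Set ℤ) ∧ v.2.2 ∈ ({2,3} : Set ℤ)} with hS
  have hdom : isDom3 6 S := by
    constructor
    · rintro ⟨a, b, c⟩ ⟨ha, hb, hc⟩
      simp only [Set.mem_insert_iff, Set.mem_singleton_iff] at ha hb hc
      constructor <;> refine ⟨?_, ?_, ?_⟩ <;> simp <;> omega
    · rintro ⟨a, b, c⟩ hv
      obtain ⟨⟨ha0, hb0, hc0⟩, ha5, hb5, hc5⟩ := hv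
      simp only at ha0 hb0 hc0 ha5 hb5 hc5
      norm_num at ha5 hb5 hc5
      refine ⟨(g a, g b, g c), ⟨?_, ?_, ?_⟩, ?_⟩
      · simpa using g_mem a
      · simpa using g_mem b
      · simpa using g_mem c
      · by_cases h : ((g a, g b, g c) : ℤ×ℤ×ℤ) = (a, b, c)
        · exact Or.inl h
        · exact Or.inr (adj_of _ _ h (g_diff a ha0 ha5) (g_diff b hb0 hb5) (g_diff c hc0 hc5))
  refine ⟨hdom, ?_⟩
  have hcard : S.ncard = 8 := by
    have he : S = ↑((({2,3} : Finset ℤ) ×ˢ (({2,3} : Finset ℤ) ×ˢ ({2,3} : Finset ℤ)))) := by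
      ext ⟨a, b, c⟩
      simp [hS, Finset.mem_product]
    rw [he, Set.ncard_coe_finset]
    decide
  exact Nat.sInf_le ⟨S, hdom, hcard⟩
end
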